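/- Let G = (V, F, w) be a weighted multigraph, let t > 0, and let F_{≥t} := {f ∈ F : w(f) > 0 and k_f ≥ t}, where k_f denotes strength in G. Let A ⊆ V be the vertex set of a connected component of the graph (V, F_{≥t}). Then for every edge f ∈ F_{≥t} with both endpoints in A, the strength of f in the weighted multigraph (A, {g ∈ F_{≥t} : g ⊆ A}, w) equals k_f, its strength in G. -/

import Mathlib

open Finset
open scoped Classical

/-- An edge `f` crosses the cut `S` if exactly one of its endpoints lies in `S`. -/
def crossesCut {V F : Type} (ep : F → V × V) (S : Finset V) (f : F) : Prop :=
  ((ep f).1 ∈ S ∧ (ep f).2 ∉ S) ∨ ((ep f).1 ∉ S ∧ (ep f).2 ∈ S)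

/-- Total weight of edges of the induced subgraph `G[X]` crossing the cut `S`. -/
noncomputable def cutWt {V F : Type} [Fintype F] (ep : F → V × V) (w : F → ℝ)
    (X S : Finset V) : ℝ :=
  ∑ f : F, if (ep f).1 ∈ X ∧ (ep f).2 ∈ X ∧ crossesCut ep S f then w f else 0

/-- The min-cut of the induced subgraph `G[X]`: the least total weight of edges of `G[X]`
crossing a cut `(S, X \ S)` with `∅ ⊊ S ⊊ X`. -/
noncomputable def minCutIn {V F : Type} [Fintype F] (ep : F → V × V) (w : F → ℝ)
    (X : Finset V) : ℝ :=
  sInf {c : ℝ | ∃ S : Finset V, S ⊆ X ∧ S.Nonempty ∧ S ≠ X ∧ c = cutWt ep w X S}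

/-- The strength of an edge `f`: the maximum of the min-cut of `G[X]` over all vertex
sets `X` containing both endpoints of `f`. -/
noncomputable def strength {V F : Type} [Fintype V] [Fintype F] (ep : F → V × V)
    (w : F → ℝ) (f : F) : ℝ :=
  sSup {c : ℝ | ∃ X : Finset V, (ep f).1 ∈ X ∧ (ep f).2 ∈ X ∧ c = minCutIn ep w X}

/-! The strength `k_f` is a maximum, attained at some vertex set `X₀` with
`k_f = mincut G[X₀]`, and every edge of `G[X₀]` is at least as strong as `f`. When
`k_f ≥ t > 0`, a cut of `G[X₀]` separating `X₀` along the components of `(V, F_{≥ t})` would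
have positive weight and hence be crossed by an edge of `F_{≥ t}`; so `X₀` lies in the
component `A`. On `G[X₀]` the weights zeroed outside `F_{≥ t}` agree with `w`, so `X₀` also
witnesses `k_f` in the restricted multigraph, while restricting the weights can only decrease
min-cuts. -/

theorem ne_of_crossesCut {V F : Type} (ep : F → V × V) {S : Finset V} {g : F}
    (h : crossesCut ep S g) : (ep g).1 ≠ (ep g).2 := by
  rintro heq
  rcases h with ⟨h1, h2⟩ | ⟨h1, h2⟩ <;> simp_all

section Cuts

variable {V F : Type} [Fintype F] (ep : F → V × V)

theorem cutWt_nonneg {w : F → ℝ} (hw : ∀ g, 0 ≤ w g) (X S : Finset V) :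
    0 ≤ cutWt ep w X S :=
  sum_nonneg fun g _ => by split_ifs; exacts [hw g, le_rfl]

theorem minCutIn_le_cutWt {w : F → ℝ} (hw : ∀ g, 0 ≤ w g) {X S : Finset V}
    (hSX : S ⊆ X) (hS : S.Nonempty) (hne : S ≠ X) :
    minCutIn ep w X ≤ cutWt ep w X S := by
  refine csInf_le ⟨0, ?_⟩ ⟨S, hSX, hS, hne, rfl⟩
  rintro c ⟨S', -, -, -, rfl⟩
  exact cutWt_nonneg ep hw X S'

theorem minCutIn_mono {w w' : F → ℝ} (hw' : ∀ g, 0 ≤ w' g) (hle : ∀ g, w' g ≤ w g)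
    (X : Finset V) : minCutIn ep w' X ≤ minCutIn ep w X := by
  by_cases hcut : ∃ S : Finset V, S ⊆ X ∧ S.Nonempty ∧ S ≠ X
  · obtain ⟨S₀, hS₀⟩ := hcut
    refine le_csInf ⟨_, S₀, hS₀.1, hS₀.2.1, hS₀.2.2, rfl⟩ ?_
    rintro c ⟨S, hSX, hS, hne, rfl⟩
    exact (minCutIn_le_cutWt ep hw' hSX hS hne).trans
      (sum_le_sum fun g _ => by split_ifs; exacts [hle g, le_rfl])
  · have hempty : ∀ u : F → ℝ,
        {c : ℝ | ∃ S : Finset V, S ⊆ X ∧ S.Nonempty ∧ S ≠ X ∧ c = cutWt ep u X S} = ∅ :=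
      fun u => Set.eq_empty_of_forall_notMem fun c ⟨S, hSX, hS, hne, _⟩ =>
        hcut ⟨S, hSX, hS, hne⟩
    rw [minCutIn, minCutIn, hempty, hempty]

theorem minCutIn_congr {w w' : F → ℝ} {X : Finset V}
    (h : ∀ g, (ep g).1 ∈ X → (ep g).2 ∈ X → w' g = w g) :
    minCutIn ep w' X = minCutIn ep w X := by
  have hcut : ∀ S, cutWt ep w' X S = cutWt ep w X S := fun S =>
    sum_congr rfl fun g _ => by
      split_ifs with hg
      exacts [h g hg.1 hg.2.1, rfl]
  simp only [minCutIn, hcut]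

theorem exists_crossesCut_pos_of_minCutIn_pos {w : F → ℝ} (hw : ∀ g, 0 ≤ w g)
    {X S : Finset V} (hSX : S ⊆ X) (hS : S.Nonempty) (hne : S ≠ X)
    (hpos : 0 < minCutIn ep w X) :
    ∃ g, (ep g).1 ∈ X ∧ (ep g).2 ∈ X ∧ crossesCut ep S g ∧ 0 < w g := by
  have hcut : ∑ _g : F, (0 : ℝ) < cutWt ep w X S := by
    rw [sum_const_zero]
    exact hpos.trans_le (minCutIn_le_cutWt ep hw hSX hS hne)
  obtain ⟨g, -, hg⟩ := exists_lt_of_sum_lt hcut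
  split_ifs at hg with hgX
  · exact ⟨g, hgX.1, hgX.2.1, hgX.2.2, hg⟩
  · exact absurd hg (lt_irrefl 0)

end Cuts

section Strength

variable {V F : Type} [Fintype V] [Fintype F] (ep : F → V × V) (w : F → ℝ)

theorem finite_minCutIn_of_mem (f : F) :
    {c : ℝ | ∃ X : Finset V, (ep f).1 ∈ X ∧ (ep f).2 ∈ X ∧ c = minCutIn ep w X}.Finite :=
  (Set.finite_range fun X : Finset V => minCutIn ep w X).subset
    fun _ ⟨X, _, _, hc⟩ => ⟨X, hc.symm⟩

theorem minCutIn_le_strength {f : F} {X : Finset V} (h1 : (ep f).1 ∈ X) (h2 : (ep f).2 ∈ X) :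
    minCutIn ep w X ≤ strength ep w f :=
  le_csSup (finite_minCutIn_of_mem ep w f).bddAbove ⟨X, h1, h2, rfl⟩

theorem exists_minCutIn_eq_strength (f : F) :
    ∃ X : Finset V, (ep f).1 ∈ X ∧ (ep f).2 ∈ X ∧ minCutIn ep w X = strength ep w f := by
  have hmem : strength ep w f ∈
      {c : ℝ | ∃ X : Finset V, (ep f).1 ∈ X ∧ (ep f).2 ∈ X ∧ c = minCutIn ep w X} :=
    Set.Nonempty.csSup_mem ⟨_, univ, mem_univ _, mem_univ _, rfl⟩
      (finite_minCutIn_of_mem ep w f)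
  obtain ⟨X, h1, h2, hX⟩ := hmem
  exact ⟨X, h1, h2, hX.symm⟩

/-- The graph `(V, F_{≥ t})`. -/
def heavyGraph (t : ℝ) : SimpleGraph V :=
  SimpleGraph.fromRel fun a b => ∃ g : F, 0 < w g ∧ t ≤ strength ep w g ∧ ep g = (a, b)

/-- The weights `w` restricted to `F_{≥ t}`, extended by zero. -/
noncomputable def heavyWeight (t : ℝ) (g : F) : ℝ :=
  if 0 < w g ∧ t ≤ strength ep w g then w g else 0

theorem heavyWeight_nonneg (t : ℝ) (g : F) : 0 ≤ heavyWeight ep w t g := by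
  unfold heavyWeight
  split_ifs with h
  exacts [h.1.le, le_rfl]

theorem heavyWeight_le {w : F → ℝ} (hw : ∀ g, 0 ≤ w g) (t : ℝ) (g : F) :
    heavyWeight ep w t g ≤ w g := by
  unfold heavyWeight
  split_ifs
  exacts [le_rfl, hw g]

theorem minCutIn_heavyWeight {w : F → ℝ} (hw : ∀ g, 0 ≤ w g) {t : ℝ} {X : Finset V}
    (hX : t ≤ minCutIn ep w X) : minCutIn ep (heavyWeight ep w t) X = minCutIn ep w X := by
  refine minCutIn_congr ep fun g h1 h2 => ?_
  rcases (hw g).lt_or_eq with hpos | hzero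
  · exact if_pos ⟨hpos, hX.trans (minCutIn_le_strength ep w h1 h2)⟩
  · simp [heavyWeight, ← hzero]

theorem reachable_of_le_minCutIn {w : F → ℝ} (hw : ∀ g, 0 ≤ w g) {t : ℝ} (ht : 0 < t)
    {X : Finset V} (hX : t ≤ minCutIn ep w X) {v₀ u₀ : V} (hu₀ : u₀ ∈ X)
    (hvu₀ : (heavyGraph ep w t).Reachable v₀ u₀) :
    ∀ u ∈ X, (heavyGraph ep w t).Reachable v₀ u := by
  set S := X.filter ((heavyGraph ep w t).Reachable v₀)
  suffices hSX : S = X by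
    intro u hu
    rw [← hSX] at hu
    exact (mem_filter.mp hu).2
  by_contra hne
  obtain ⟨g, hg1, hg2, hcross, hg⟩ := exists_crossesCut_pos_of_minCutIn_pos ep hw
    (filter_subset _ X) ⟨u₀, mem_filter.mpr ⟨hu₀, hvu₀⟩⟩ hne (ht.trans_le hX)
  have hadj : (heavyGraph ep w t).Adj (ep g).1 (ep g).2 :=
    (SimpleGraph.fromRel_adj _ _ _).mpr ⟨ne_of_crossesCut ep hcross,
      Or.inl ⟨g, hg, hX.trans (minCutIn_le_strength ep w hg1 hg2), rfl⟩⟩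
  rcases hcross with ⟨hin, hout⟩ | ⟨hout, hin⟩
  · exact hout (mem_filter.mpr ⟨hg2, (mem_filter.mp hin).2.trans hadj.reachable⟩)
  · exact hout (mem_filter.mpr ⟨hg1, (mem_filter.mp hin).2.trans hadj.symm.reachable⟩)

end Strength

theorem stmt14_general {V F : Type} [Fintype V] [Fintype F]
    (ep : F → V × V)
    (w : F → ℝ) (hw : ∀ f, 0 ≤ w f)
    (t : ℝ) (ht : 0 < t)
    (A : Finset V)
    (hA : ∃ v₀ : V, ∀ u : V, u ∈ A ↔
      (SimpleGraph.fromRel (fun a b =>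
        ∃ g : F, 0 < w g ∧ t ≤ strength ep w g ∧ ep g = (a, b))).Reachable v₀ u)
    (f : F) (hft : t ≤ strength ep w f)
    (hfA1 : (ep f).1 ∈ A) :
    sSup {c : ℝ | ∃ X : Finset V, X ⊆ A ∧ (ep f).1 ∈ X ∧ (ep f).2 ∈ X ∧
        c = minCutIn ep (fun g => if 0 < w g ∧ t ≤ strength ep w g then w g else 0) X}
      = strength ep w f := by
  obtain ⟨v₀, hv₀⟩ := hA
  obtain ⟨X₀, h1, h2, hX₀⟩ := exists_minCutIn_eq_strength ep w f
  have htX₀ : t ≤ minCutIn ep w X₀ := hX₀ ▸ hft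
  have hX₀A : X₀ ⊆ A := fun u hu =>
    (hv₀ u).mpr (reachable_of_le_minCutIn ep hw ht htX₀ h1 ((hv₀ _).mp hfA1) u hu)
  have hle : ∀ X : Finset V, (ep f).1 ∈ X → (ep f).2 ∈ X →
      minCutIn ep (heavyWeight ep w t) X ≤ strength ep w f := fun X hX1 hX2 =>
    (minCutIn_mono ep (heavyWeight_nonneg ep w t) (heavyWeight_le ep hw t) X).trans
      (minCutIn_le_strength ep w hX1 hX2)
  apply le_antisymm
  · refine csSup_le ⟨_, X₀, hX₀A, h1, h2, rfl⟩ ?_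
    rintro c ⟨X, -, hX1, hX2, rfl⟩
    exact hle X hX1 hX2
  · refine le_csSup_of_le ⟨strength ep w f, ?_⟩ ⟨X₀, hX₀A, h1, h2, rfl⟩ ?_
    · rintro c ⟨X, -, hX1, hX2, rfl⟩
      exact hle X hX1 hX2
    · exact ((minCutIn_heavyWeight ep hw htX₀).trans hX₀).ge

/-- Let `t > 0`, let `F_{≥ t}` be the positive-weight edges of strength at
least `t`, and let `A` be the vertex set of a connected component of the graph `(V, F_{≥ t})`.
Then for every edge `f ∈ F_{≥ t}` with both endpoints in `A`, the strength of `f` computed in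
the weighted multigraph `(A, {g ∈ F_{≥ t} : g ⊆ A}, w)` (formalized as the supremum of the
min-cuts of induced subgraphs `X ⊆ A` with respect to the weights zeroed outside `F_{≥ t}`)
equals `k_f`, the strength of `f` in `G`. -/
theorem stmt14 {V F : Type} [Fintype V] [Fintype F]
    (ep : F → V × V) (hep : ∀ f, (ep f).1 ≠ (ep f).2)
    (w : F → ℝ) (hw : ∀ f, 0 ≤ w f)
    (t : ℝ) (ht : 0 < t)
    (A : Finset V)
    (hA : ∃ v₀ : V, ∀ u : V, u ∈ A ↔
      (SimpleGraph.fromRel (fun a b =>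
        ∃ g : F, 0 < w g ∧ t ≤ strength ep w g ∧ ep g = (a, b))).Reachable v₀ u)
    (f : F) (hfw : 0 < w f) (hft : t ≤ strength ep w f)
    (hfA1 : (ep f).1 ∈ A) (hfA2 : (ep f).2 ∈ A) :
    sSup {c : ℝ | ∃ X : Finset V, X ⊆ A ∧ (ep f).1 ∈ X ∧ (ep f).2 ∈ X ∧
        c = minCutIn ep (fun g => if 0 < w g ∧ t ≤ strength ep w g then w g else 0) X}
      = strength ep w f :=
  stmt14_general ep w hw t ht A hA f hft hfA1
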